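/- arXiv:math/9805132 — 4 statements merged into one kernel-verified Lean document; each statement's English description precedes it below -/
import Mathlib

section
/- Let E be a finite-dimensional vector space over F_2 of even dimension m with a nondegenerate quadratic form q given in a hyperbolic basis e_1,...,e_m by q(Σ x_i e_i) = Σ_{j=1}^{m/2} x_j x_{m/2+j}. Then the map D sending an orthogonal transformation, written as a symplectic matrix M = (A B; C D) with the diagonals of AᵀC and BᵀD zero, to trace(CᵀB) ∈ Z/2Z is a group homomorphism from O(E) to Z/2Z. -/
open Matrix


-- char two helpers
lemma zmtwo_add_self {ι κ : Type*} (a : Matrix ι κ (ZMod 2)) : a + a = 0 := by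
  ext i j
  simp [Matrix.add_apply]
  exact CharTwo.add_self_eq_zero _

lemma zm_cancel {a b : ZMod 2} (h : a + b = 0) : a = b := by
  revert h; revert a b; decide

lemma zmmat_cancel {ι κ : Type*} {a b : Matrix ι κ (ZMod 2)} (h : a + b = 0) : a = b := by
  ext i j
  exact zm_cancel (by have := congrFun (congrFun h i) j; simpa using this)

-- alternating * symmetric has zero trace
lemma alt_trace {k : ℕ} (S V : Matrix (Fin k) (Fin k) (ZMod 2))
    (hS : Sᵀ = S) (hd : ∀ i, S i i = 0) (hV : Vᵀ = V) : (S * V).trace = 0 := by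
  classical
  have : (S * V).trace = ∑ p ∈ Finset.univ ×ˢ (Finset.univ : Finset (Fin k)),
      S p.1 p.2 * V p.2 p.1 := by
    rw [Matrix.trace, Finset.sum_product]
    simp [Matrix.diag, Matrix.mul_apply]
  rw [this]
  apply Finset.sum_involution (fun p _ => Prod.swap p)
  · intro p _
    have h1 : S p.2 p.1 = S p.1 p.2 := by
      have := congrFun (congrFun hS p.1) p.2
      rwa [Matrix.transpose_apply] at this
    have h2 : V p.1 p.2 = V p.2 p.1 := by
      have := congrFun (congrFun hV p.2) p.1
      rwa [Matrix.transpose_apply] at this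
    simp only [Prod.swap]
    rw [h1, h2]
    exact CharTwo.add_self_eq_zero _
  · intro p _ hne
    intro hc
    apply hne
    have : p.1 = p.2 := by
      have := congrArg Prod.fst hc
      simpa using this.symm
    rw [this, hd]
    simp
  · intro p _; simp
  · intro p _; simp

-- key facts for a q-preserving matrix
lemma ortho_props (n : ℕ)
    (q : ((Fin n ⊕ Fin n) → ZMod 2) → ZMod 2)
    (hq : ∀ x, q x = ∑ j : Fin n, x (Sum.inl j) * x (Sum.inr j))
    (P : Matrix (Fin n ⊕ Fin n) (Fin n ⊕ Fin n) (ZMod 2))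
    (hP : ∀ x, q (P.mulVec x) = q x) :
    Pᵀ * (fromBlocks 0 1 1 0) * P = fromBlocks 0 1 1 0 ∧
    P.toBlocks₂₁ᵀ * P.toBlocks₁₁ = P.toBlocks₁₁ᵀ * P.toBlocks₂₁ ∧
    P.toBlocks₂₁ᵀ * P.toBlocks₁₂ = P.toBlocks₁₁ᵀ * P.toBlocks₂₂ + 1 ∧
    P.toBlocks₂₂ᵀ * P.toBlocks₁₂ = P.toBlocks₁₂ᵀ * P.toBlocks₂₂ ∧
    (∀ i, (P.toBlocks₁₁ᵀ * P.toBlocks₂₁) i i = 0) ∧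
    (∀ i, (P.toBlocks₁₂ᵀ * P.toBlocks₂₂) i i = 0) := by
  classical
  set K : Matrix (Fin n ⊕ Fin n) (Fin n ⊕ Fin n) (ZMod 2) := fromBlocks 0 1 0 0 with hK
  -- q as a matrix form
  have hqK : ∀ y, q y = y ⬝ᵥ K.mulVec y := by
    intro y
    rw [hq]
    symm
    simp [hK, dotProduct, mulVec, Fintype.sum_sum_type, Matrix.one_apply, Finset.mul_sum,
      mul_ite, ite_mul]
  set H : Matrix (Fin n ⊕ Fin n) (Fin n ⊕ Fin n) (ZMod 2) := Pᵀ * K * P + K with hH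
  have hHx : ∀ x, x ⬝ᵥ H.mulVec x = 0 := by
    intro x
    have h1 : x ⬝ᵥ (Pᵀ * K * P).mulVec x = q (P.mulVec x) := by
      rw [hqK]
      rw [← mulVec_mulVec, ← mulVec_mulVec, dotProduct_mulVec, vecMul_transpose]
    rw [hH, add_mulVec, dotProduct_add, h1, ← hqK, hP, CharTwo.add_self_eq_zero]
  have hd : ∀ a, H a a = 0 := by
    intro a
    have := hHx (Pi.single a 1)
    simpa [mulVec_single, single_dotProduct] using this
  have hsum : ∀ a b, H a b + H b a = 0 := by
    intro a b
    rcases eq_or_ne a b with rfl | hab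
    · exact CharTwo.add_self_eq_zero _
    · have := hHx (Pi.single a 1 + Pi.single b 1)
      have hx : (Pi.single a 1 + Pi.single b 1) ⬝ᵥ
          H.mulVec (Pi.single a 1 + Pi.single b 1)
          = H a a + H a b + (H b a + H b b) := by
        rw [mulVec_add, dotProduct_add, add_dotProduct, add_dotProduct]
        simp [mulVec_single, single_dotProduct]
        abel
      rw [hx, hd a, hd b] at this
      simpa using this
  have hHsymm : Hᵀ = H := by
    ext i j
    rw [Matrix.transpose_apply]
    exact (zm_cancel (hsum i j)).symm
  -- block form of H
  set A := P.toBlocks₁₁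
  set B := P.toBlocks₁₂
  set C := P.toBlocks₂₁
  set D := P.toBlocks₂₂
  have hPB : P = fromBlocks A B C D := (fromBlocks_toBlocks P).symm
  have hHblk : H = fromBlocks (Aᵀ*C) (Aᵀ*D + 1) (Bᵀ*C) (Bᵀ*D) := by
    rw [hH, hK, hPB]
    simp [fromBlocks_transpose, fromBlocks_multiply, fromBlocks_add]
  have hHtblk : Hᵀ = fromBlocks (Cᵀ*A) (Cᵀ*B) (Dᵀ*A + 1) (Dᵀ*B) := by
    rw [hHblk, fromBlocks_transpose]
    simp [transpose_mul, transpose_add]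
  have hEq := hHtblk.symm.trans (hHsymm.trans hHblk)
  -- extract blocks
  have h11 : Cᵀ*A = Aᵀ*C := by
    have := congrArg Matrix.toBlocks₁₁ hEq
    simpa [Matrix.toBlocks_fromBlocks₁₁] using this
  have h12 : Cᵀ*B = Aᵀ*D + 1 := by
    have := congrArg Matrix.toBlocks₁₂ hEq
    simpa [Matrix.toBlocks_fromBlocks₁₂] using this
  have h22 : Dᵀ*B = Bᵀ*D := by
    have := congrArg Matrix.toBlocks₂₂ hEq
    simpa [Matrix.toBlocks_fromBlocks₂₂] using this
  have d1 : ∀ i, (Aᵀ*C) i i = 0 := by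
    intro i
    have := hd (Sum.inl i)
    rwa [hHblk, fromBlocks_apply₁₁] at this
  have d2 : ∀ i, (Bᵀ*D) i i = 0 := by
    intro i
    have := hd (Sum.inr i)
    rwa [hHblk, fromBlocks_apply₂₂] at this
  refine ⟨?_, h11, ?_, h22, d1, d2⟩
  · -- symplectic: Pᵀ J P = J with J = K + Kᵀ
    have hJ : (fromBlocks 0 1 1 0 : Matrix (Fin n ⊕ Fin n) (Fin n ⊕ Fin n) (ZMod 2))
        = K + Kᵀ := by
      rw [hK, fromBlocks_transpose]
      simp [fromBlocks_add]
    rw [hJ]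
    have hGt : Pᵀ * Kᵀ * P = (Pᵀ * K * P)ᵀ := by
      simp [transpose_mul, mul_assoc]
    have hHt : (Pᵀ * K * P)ᵀ + Kᵀ = Pᵀ * K * P + K := by
      have := hHsymm
      rw [hH, transpose_add] at this
      exact this
    have expand : Pᵀ * (K + Kᵀ) * P = Pᵀ * K * P + Pᵀ * Kᵀ * P := by
      rw [mul_add, add_mul]
    rw [expand, hGt]
    have : (Pᵀ * K * P)ᵀ = Pᵀ * K * P + K + Kᵀ := by
      have h := hHt
      have := congrArg (· + Kᵀ) h
      simpa [add_assoc, zmtwo_add_self] using this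
    rw [this, ← add_assoc, ← add_assoc, zmtwo_add_self, zero_add]
  · rw [h12]

lemma trace_helper {k : ℕ} (X Y Z W : Matrix (Fin k) (Fin k) (ZMod 2)) :
    ((X*Y)ᵀ*(Z*W)).trace = ((Xᵀ*Z)*(W*Yᵀ)).trace := by
  rw [transpose_mul, mul_assoc, trace_mul_comm]
  simp only [mul_assoc]

/-- Let `E = F₂^{n} ⊕ F₂^{n}` carry the hyperbolic quadratic form
`q(x) = ∑ x_j x_{n+j}`.  For an orthogonal matrix `M = (A B; C D)` (i.e. one preserving
`q`; such a matrix is automatically symplectic with the diagonals of `AᵀC` and `BᵀD`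
zero), the Dickson invariant is `D(M) = trace(CᵀB) ∈ F₂`.  The map `D` is a group
homomorphism on the orthogonal group. -/
theorem dickson_trace_is_group_hom (n : ℕ)
    (q : ((Fin n ⊕ Fin n) → ZMod 2) → ZMod 2)
    (hq : ∀ x, q x = ∑ j : Fin n, x (Sum.inl j) * x (Sum.inr j))
    (Dk : Matrix (Fin n ⊕ Fin n) (Fin n ⊕ Fin n) (ZMod 2) → ZMod 2)
    (hDk : ∀ M, Dk M = ((M.toBlocks₂₁)ᵀ * M.toBlocks₁₂).trace)
    (M N : Matrix (Fin n ⊕ Fin n) (Fin n ⊕ Fin n) (ZMod 2))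
    (hM : ∀ x, q (M.mulVec x) = q x)
    (hN : ∀ x, q (N.mulVec x) = q x) :
    Dk (M * N) = Dk M + Dk N := by
  classical
  obtain ⟨hMJ, m11, m12, m22, md1, md2⟩ := ortho_props n q hq M hM
  obtain ⟨hNJ, -, -, -, -, -⟩ := ortho_props n q hq N hN
  set J : Matrix (Fin n ⊕ Fin n) (Fin n ⊕ Fin n) (ZMod 2) := fromBlocks 0 1 1 0 with hJdef
  set A := M.toBlocks₁₁ with hA
  set B := M.toBlocks₁₂ with hB
  set C := M.toBlocks₂₁ with hC
  set D := M.toBlocks₂₂ with hD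
  set A' := N.toBlocks₁₁ with hA'
  set B' := N.toBlocks₁₂ with hB'
  set C' := N.toBlocks₂₁ with hC'
  set D' := N.toBlocks₂₂ with hD'
  have hMblk : M = fromBlocks A B C D := (fromBlocks_toBlocks M).symm
  have hNblk : N = fromBlocks A' B' C' D' := (fromBlocks_toBlocks N).symm
  -- J * J = 1
  have hJJ : J * J = 1 := by
    rw [hJdef]
    simp [fromBlocks_multiply]
  -- N J Nᵀ = J
  have hleft : (J * Nᵀ * J) * N = 1 := by
    rw [mul_assoc, mul_assoc, ← mul_assoc Nᵀ J N, hNJ, hJJ]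
  have hNinv : N * (J * Nᵀ * J) = 1 := mul_eq_one_comm.mp hleft
  have hNJN : N * J * Nᵀ = J := by
    have h1 : N * J * Nᵀ * J = 1 := by
      rw [mul_assoc, mul_assoc, ← mul_assoc J Nᵀ J]
      exact hNinv
    calc N * J * Nᵀ = N * J * Nᵀ * (J * J) := by rw [hJJ, mul_one]
      _ = (N * J * Nᵀ * J) * J := (mul_assoc _ J J).symm
      _ = J := by rw [h1, one_mul]
  -- block identities for N
  have step1 : N * J = fromBlocks B' A' D' C' := by
    rw [hNblk, hJdef]
    simp [fromBlocks_multiply]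
  have step2 : N * J * Nᵀ
      = fromBlocks (B'*A'ᵀ + A'*B'ᵀ) (B'*C'ᵀ + A'*D'ᵀ) (D'*A'ᵀ + C'*B'ᵀ) (D'*C'ᵀ + C'*D'ᵀ) := by
    rw [step1]
    conv_lhs => rw [hNblk]
    rw [fromBlocks_transpose, fromBlocks_multiply]
  have hBlkEq : fromBlocks (B'*A'ᵀ + A'*B'ᵀ) (B'*C'ᵀ + A'*D'ᵀ) (D'*A'ᵀ + C'*B'ᵀ) (D'*C'ᵀ + C'*D'ᵀ)
      = fromBlocks 0 1 1 0 := by rw [← step2, hNJN]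
  have g11 : B'*A'ᵀ + A'*B'ᵀ = (0 : Matrix (Fin n) (Fin n) (ZMod 2)) := by
    have := congrArg Matrix.toBlocks₁₁ hBlkEq
    simpa [Matrix.toBlocks_fromBlocks₁₁] using this
  have g21 : D'*A'ᵀ + C'*B'ᵀ = (1 : Matrix (Fin n) (Fin n) (ZMod 2)) := by
    have := congrArg Matrix.toBlocks₂₁ hBlkEq
    simpa [Matrix.toBlocks_fromBlocks₂₁] using this
  have g22 : D'*C'ᵀ + C'*D'ᵀ = (0 : Matrix (Fin n) (Fin n) (ZMod 2)) := by
    have := congrArg Matrix.toBlocks₂₂ hBlkEq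
    simpa [Matrix.toBlocks_fromBlocks₂₂] using this
  -- blocks of M * N
  have hMN21 : (M*N).toBlocks₂₁ = C*A' + D*C' := by
    rw [hMblk, hNblk, fromBlocks_multiply, Matrix.toBlocks_fromBlocks₂₁]
  have hMN12 : (M*N).toBlocks₁₂ = A*B' + B*D' := by
    rw [hMblk, hNblk, fromBlocks_multiply, Matrix.toBlocks_fromBlocks₁₂]
  -- the four trace terms
  have e1 : ((C*A')ᵀ*(A*B')).trace = 0 := by
    rw [trace_helper]
    refine alt_trace _ _ ?_ ?_ ?_
    · rw [transpose_mul, transpose_transpose]; exact m11.symm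
    · intro i; rw [m11]; exact md1 i
    · rw [transpose_mul, transpose_transpose]; exact (zmmat_cancel g11).symm
  have e4 : ((D*C')ᵀ*(B*D')).trace = 0 := by
    rw [trace_helper]
    refine alt_trace _ _ ?_ ?_ ?_
    · rw [transpose_mul, transpose_transpose]; exact m22.symm
    · intro i; rw [m22]; exact md2 i
    · rw [transpose_mul, transpose_transpose]; exact (zmmat_cancel g22).symm
  have e2 : ((C*A')ᵀ*(B*D')).trace = ((Cᵀ*B)*(D'*A'ᵀ)).trace := trace_helper C A' B D'
  have hAD : Aᵀ*D = Cᵀ*B + 1 := by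
    rw [m12, add_assoc, zmtwo_add_self (1 : Matrix (Fin n) (Fin n) (ZMod 2)), add_zero]
  have hDA : Dᵀ*A = Bᵀ*C + 1 := by
    have := congrArg Matrix.transpose hAD
    simpa [transpose_mul, transpose_add] using this
  have e3 : ((D*C')ᵀ*(A*B')).trace = ((Cᵀ*B)*(C'*B'ᵀ)).trace + (C'ᵀ*B').trace := by
    rw [trace_helper, hDA, add_mul, one_mul, trace_add]
    congr 1
    · calc ((Bᵀ*C)*(B'*C'ᵀ)).trace = (((Bᵀ*C)*(B'*C'ᵀ))ᵀ).trace := (trace_transpose _).symm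
        _ = ((C'*B'ᵀ)*(Cᵀ*B)).trace := by simp [transpose_mul]
        _ = ((Cᵀ*B)*(C'*B'ᵀ)).trace := trace_mul_comm _ _
    · exact trace_mul_comm _ _
  -- assemble
  rw [hDk, hDk, hDk, hMN21, hMN12]
  have expand : (C*A' + D*C')ᵀ*(A*B' + B*D')
      = (C*A')ᵀ*(A*B') + (C*A')ᵀ*(B*D') + ((D*C')ᵀ*(A*B') + (D*C')ᵀ*(B*D')) := by
    rw [transpose_add, add_mul, mul_add, mul_add]
  rw [expand, trace_add, trace_add, trace_add, e1, e2, e3, e4, zero_add, add_zero]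
  have : (Cᵀ*B)*(D'*A'ᵀ) + (Cᵀ*B)*(C'*B'ᵀ) = Cᵀ*B := by
    rw [← mul_add, g21, mul_one]
  calc ((Cᵀ*B)*(D'*A'ᵀ)).trace + (((Cᵀ*B)*(C'*B'ᵀ)).trace + (C'ᵀ*B').trace)
      = ((Cᵀ*B)*(D'*A'ᵀ) + (Cᵀ*B)*(C'*B'ᵀ)).trace + (C'ᵀ*B').trace := by
        rw [trace_add]; ring
    _ = (Cᵀ*B).trace + (C'ᵀ*B').trace := by rw [this]
end

section
/- Let E be a 2n-dimensional F_2-vector space with nondegenerate hyperbolic quadratic form q, and let F' ⊆ E be an isotropic subspace that is not maximal isotropic. Then there exists an element g ∈ O(E) with nontrivial Dickson invariant which fixes F' pointwise (or at least stabilizes F' as a set). -/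
open Module

/-- The hyperbolic quadratic form on `F₂^n ⊕ F₂^n`. -/
def hypq (n : ℕ) (x : (Fin n ⊕ Fin n) → ZMod 2) : ZMod 2 :=
  ∑ j : Fin n, x (Sum.inl j) * x (Sum.inr j)

def IsIsotropic (n : ℕ) (F : Submodule (ZMod 2) ((Fin n ⊕ Fin n) → ZMod 2)) : Prop :=
  ∀ x ∈ F, hypq n x = 0

def IsMaxIsotropic (n : ℕ) (F : Submodule (ZMod 2) ((Fin n ⊕ Fin n) → ZMod 2)) : Prop :=
  IsIsotropic n F ∧ ∀ F', IsIsotropic n F' → F ≤ F' → F' = F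

/-- The Dickson invariant of a linear endomorphism of an `F₂`-vector space:
the rank of `g - 1` reduced modulo 2. -/
noncomputable def dickson {E : Type*} [AddCommGroup E] [Module (ZMod 2) E]
    (g : E →ₗ[ZMod 2] E) : ZMod 2 :=
  (Module.finrank (ZMod 2) (LinearMap.range (g - LinearMap.id)) : ZMod 2)

/-
If `F'` is isotropic but not maximal, then `q` does not vanish on `W = F'^⊥`: otherwise `W`
would be totally isotropic for the polar form `B`, so `dim W ≤ 2n - dim W = dim F'`, whereas `W`
contains every isotropic subspace through `F'`, some of which is strictly larger than `F'`.
A vector `v ∈ W` with `q v = 1` gives the orthogonal reflection `x ↦ x - B(v, x) v`; it fixes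
`F' ⊆ v^⊥` pointwise, and `g - 1` has image `F₂ v`, so its Dickson invariant is `1`.
-/

namespace QuadraticMap

section Reflection

variable {R M : Type*} [CommRing R] [AddCommGroup M] [Module R M] {Q : QuadraticForm R M} {v : M}

lemma polarBilin_self_eq_two (hv : Q v = 1) : polarBilin Q v v = 2 := by
  rw [polarBilin_apply_apply, polar_self, hv, two_nsmul, one_add_one_eq_two]

theorem map_reflection (hv : Q v = 1) (x : M) :
    Q (Module.reflection (polarBilin_self_eq_two hv) x) = Q x := by
  rw [Module.reflection_apply, sub_eq_add_neg, QuadraticMap.map_add Q, QuadraticMap.map_neg,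
    QuadraticMap.map_smul, polar_neg_right, polar_smul_right, polarBilin_apply_apply,
    polar_comm Q v x, hv]
  simp only [smul_eq_mul]
  ring

lemma reflection_apply_of_polarBilin_eq_zero (hv : Q v = 1) {x : M} (hx : polarBilin Q x v = 0) :
    Module.reflection (polarBilin_self_eq_two hv) x = x := by
  rw [Module.reflection_apply, polarBilin_apply_apply, polar_comm, ← polarBilin_apply_apply, hx,
    zero_smul, sub_zero]

end Reflection

variable {K V : Type*} [Field K] [AddCommGroup V] [Module K V] {Q : QuadraticForm K V}

lemma le_orthogonal_of_forall_eq_zero {W : Submodule K V} (hW : ∀ x ∈ W, Q x = 0) :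
    W ≤ LinearMap.BilinForm.orthogonal (polarBilin Q) W := fun x hx y hy => by
  show polar Q y x = 0
  rw [polar, hW _ (add_mem hy hx), hW y hy, hW x hx, sub_zero, sub_zero]

theorem exists_mem_orthogonal_ne_zero_of_lt [FiniteDimensional K V]
    (hQ : (polarBilin Q).Nondegenerate) {F G : Submodule K V} (hG : ∀ x ∈ G, Q x = 0)
    (hFG : F < G) : ∃ v ∈ LinearMap.BilinForm.orthogonal (polarBilin Q) F, Q v ≠ 0 := by
  by_contra! hQW
  set W := LinearMap.BilinForm.orthogonal (polarBilin Q) F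
  have hGW : G ≤ W := (le_orthogonal_of_forall_eq_zero hG).trans
    (LinearMap.BilinForm.orthogonal_le hFG.le)
  have hWW : finrank K W ≤ finrank K V - finrank K W :=
    (Submodule.finrank_mono (le_orthogonal_of_forall_eq_zero hQW)).trans_eq
      (LinearMap.BilinForm.finrank_orthogonal hQ W)
  have hW : finrank K W = finrank K V - finrank K F := LinearMap.BilinForm.finrank_orthogonal hQ F
  have hFG' := Submodule.finrank_lt_finrank_of_lt hFG
  have hGW' := Submodule.finrank_mono hGW
  have hFV := Submodule.finrank_le F
  omega

end QuadraticMap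

namespace Module

variable {K M : Type*} [Field K] [AddCommGroup M] [Module K M] {x : M} {f : Dual K M}

lemma range_reflection_sub_id (h : f x = 2) (hf : f ≠ 0) :
    LinearMap.range ((reflection h).toLinearMap - LinearMap.id) = K ∙ x := by
  have happly : ∀ y, ((reflection h).toLinearMap - LinearMap.id : M →ₗ[K] M) y = -f y • x :=
    fun y => by simp [reflection_apply]
  refine le_antisymm ?_ ?_
  · rintro _ ⟨y, rfl⟩
    rw [happly]
    exact Submodule.smul_mem _ _ (Submodule.mem_span_singleton_self x)
  · obtain ⟨y, hy⟩ : ∃ y, f y ≠ 0 := by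
      by_contra! h0; exact hf (LinearMap.ext h0)
    rw [Submodule.span_singleton_le_iff_mem]
    refine ⟨-(f y)⁻¹ • y, ?_⟩
    rw [happly, map_smul, smul_eq_mul, neg_mul, inv_mul_cancel₀ hy, neg_neg, one_smul]

end Module

lemma dickson_reflection {M : Type*} [AddCommGroup M] [Module (ZMod 2) M] {x : M}
    {f : Module.Dual (ZMod 2) M} (h : f x = 2) (hx : x ≠ 0) (hf : f ≠ 0) :
    dickson (Module.reflection h : M →ₗ[ZMod 2] M) = 1 := by
  rw [dickson, Module.range_reflection_sub_id h hf, finrank_span_singleton hx, Nat.cast_one]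

noncomputable def hypQ (n : ℕ) : QuadraticForm (ZMod 2) ((Fin n ⊕ Fin n) → ZMod 2) :=
  ∑ j : Fin n, QuadraticMap.proj (Sum.inl j) (Sum.inr j)

lemma hypQ_apply (n : ℕ) (x : (Fin n ⊕ Fin n) → ZMod 2) : hypQ n x = hypq n x := by
  simp [hypQ, hypq, QuadraticMap.proj_apply]

lemma polar_hypQ (n : ℕ) (x y : (Fin n ⊕ Fin n) → ZMod 2) :
    QuadraticMap.polar (hypQ n) x y =
      ∑ j : Fin n, (x (Sum.inl j) * y (Sum.inr j) + x (Sum.inr j) * y (Sum.inl j)) := by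
  simp only [QuadraticMap.polar, hypQ_apply, hypq, ← Finset.sum_sub_distrib, Pi.add_apply]
  exact Finset.sum_congr rfl fun j _ => by ring

lemma nondegenerate_polarBilin_hypQ (n : ℕ) :
    (QuadraticMap.polarBilin (hypQ n)).Nondegenerate := by
  refine (LinearMap.IsRefl.nondegenerate_iff_separatingLeft fun x y h => ?_).mpr fun x hx => ?_
  · rwa [QuadraticMap.polarBilin_apply_apply, QuadraticMap.polar_comm] at h
  · funext i
    rcases i with j | j
    · simpa [polar_hypQ, Pi.single_apply] using hx (Pi.single (Sum.inr j) 1)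
    · simpa [polar_hypQ, Pi.single_apply] using hx (Pi.single (Sum.inl j) 1)

lemma exists_isIsotropic_gt_of_not_isMaxIsotropic {n : ℕ}
    {F : Submodule (ZMod 2) ((Fin n ⊕ Fin n) → ZMod 2)} (hiso : IsIsotropic n F)
    (hnotmax : ¬ IsMaxIsotropic n F) : ∃ G, IsIsotropic n G ∧ F < G := by
  simp only [IsMaxIsotropic, hiso, true_and, not_forall] at hnotmax
  obtain ⟨G, hG, hFG, hne⟩ := hnotmax
  exact ⟨G, hG, lt_of_le_of_ne hFG (Ne.symm hne)⟩

/-- If `F'` is an isotropic subspace of the hyperbolic `F₂`-space of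
dimension `2n` which is not maximal isotropic, then there is an orthogonal
transformation with nontrivial Dickson invariant fixing `F'` pointwise (in
particular stabilizing `F'` as a set). -/
theorem exists_nontrivial_dickson_stabilizing (n : ℕ)
    (F' : Submodule (ZMod 2) ((Fin n ⊕ Fin n) → ZMod 2))
    (hiso : IsIsotropic n F') (hnotmax : ¬ IsMaxIsotropic n F') :
    ∃ g : ((Fin n ⊕ Fin n) → ZMod 2) ≃ₗ[ZMod 2] ((Fin n ⊕ Fin n) → ZMod 2),
      (∀ x, hypq n (g x) = hypq n x) ∧
      dickson (g : ((Fin n ⊕ Fin n) → ZMod 2) →ₗ[ZMod 2] _) = 1 ∧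
      (∀ x ∈ F', g x = x) := by
  obtain ⟨G, hG, hFG⟩ := exists_isIsotropic_gt_of_not_isMaxIsotropic hiso hnotmax
  obtain ⟨v, hvF, hv⟩ := QuadraticMap.exists_mem_orthogonal_ne_zero_of_lt
    (nondegenerate_polarBilin_hypQ n) (fun x hx => (hypQ_apply n x).trans (hG x hx)) hFG
  have hv1 : hypQ n v = 1 := Fin.eq_one_of_ne_zero _ hv
  have hv0 : v ≠ 0 := by rintro rfl; simp at hv
  have hpolar : QuadraticMap.polarBilin (hypQ n) v ≠ 0 := fun h =>
    hv0 ((nondegenerate_polarBilin_hypQ n).1 v fun y => LinearMap.congr_fun h y)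
  refine ⟨Module.reflection (QuadraticMap.polarBilin_self_eq_two hv1), fun x => ?_,
    dickson_reflection _ hv0 hpolar, fun x hx => ?_⟩
  · rw [← hypQ_apply, ← hypQ_apply, QuadraticMap.map_reflection hv1]
  · exact QuadraticMap.reflection_apply_of_polarBilin_eq_zero hv1 (hvF x hx)
end

section
/- Let Λ be the Leech lattice. The sublattices of Λ isomorphic to D_{24}(2) are in natural bijection with the frames of Λ, where a frame is a set of 24 distinct pairs ±v_i of norm-8 vectors of Λ all congruent to each other modulo 2Λ; the sublattice associated to a frame is generated by the vectors (±v_i ± v_j)/2. -/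
open Matrix Module

/-- An even unimodular positive definite lattice of rank `m`, presented by the Gram
matrix of a `ℤ`-basis.  The underlying `ℤ`-module is `Fin m → ℤ`. -/
structure EvenUnimodularLattice (m : ℕ) where
  gram : Matrix (Fin m) (Fin m) ℤ
  symm : gram.IsSymm
  posdef : ∀ x : Fin m → ℤ, x ≠ 0 → 0 < x ⬝ᵥ gram.mulVec x
  even : ∀ x : Fin m → ℤ, 2 ∣ x ⬝ᵥ gram.mulVec x
  unimodular : gram.det = 1

namespace EvenUnimodularLattice

variable {m : ℕ} (Λ : EvenUnimodularLattice m)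

/-- The bilinear form `(x, y)` of the lattice. -/
def inner (Λ : EvenUnimodularLattice m) (x y : Fin m → ℤ) : ℤ := x ⬝ᵥ Λ.gram.mulVec y

/-- Reduction modulo `2Λ`, identifying `Λ/2Λ` with `(F₂)^m` via the chosen basis. -/
def red (_Λ : EvenUnimodularLattice m) (x : Fin m → ℤ) : Fin m → ZMod 2 := fun i => (x i : ZMod 2)

/-- A subspace `F ⊆ Λ/2Λ` is isotropic for the quadratic form
`q(x mod 2Λ) = (x,x)/2 mod 2`, i.e. `(x,x) ≡ 0 (mod 4)` for every lift `x` of an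
element of `F`. -/
def Isotropic (F : Submodule (ZMod 2) (Fin m → ZMod 2)) : Prop :=
  ∀ x : Fin m → ℤ, Λ.red x ∈ F → (4 : ℤ) ∣ Λ.inner x x

/-- A maximal isotropic subspace of `Λ/2Λ`. -/
def MaximalIsotropic (F : Submodule (ZMod 2) (Fin m → ZMod 2)) : Prop :=
  Λ.Isotropic F ∧ ∀ F', Λ.Isotropic F' → F ≤ F' → F' = F

end EvenUnimodularLattice

/-- The Leech lattice: the (unique) even unimodular positive definite lattice of
rank 24 with no roots. -/
def IsLeech (Λ : EvenUnimodularLattice 24) : Prop :=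
  ∀ v : Fin 24 → ℤ, Λ.inner v v ≠ 2

/-- A frame of the Leech lattice: a set of 24 distinct pairs `±v` (48 vectors) of
norm-8 vectors, all congruent to each other modulo `2Λ`. -/
def IsFrame (Λ : EvenUnimodularLattice 24) (S : Set (Fin 24 → ℤ)) : Prop :=
  Nat.card S = 48 ∧ (∀ v ∈ S, -v ∈ S) ∧ (∀ v ∈ S, Λ.inner v v = 8) ∧
  (∀ v ∈ S, ∀ u ∈ S, Λ.red v = Λ.red u)

/-- The sublattice associated to a frame (or part of a frame): it is generated by
the vectors `(u + v)/2` for distinct non-opposite `u, v` in the set. -/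
def halfSumLattice (S : Set (Fin 24 → ℤ)) : Submodule ℤ (Fin 24 → ℤ) :=
  Submodule.span ℤ {x | ∃ u ∈ S, ∃ v ∈ S, v ≠ u ∧ v ≠ -u ∧ (2 : ℤ) • x = u + v}

/-- The root lattice `D₂₄ = {x ∈ ℤ²⁴ : ∑ xᵢ even}` with the standard inner product. -/
def D24 : Submodule ℤ (Fin 24 → ℤ) where
  carrier := {x | (2 : ℤ) ∣ ∑ i, x i}
  add_mem' := by
    intro a b ha hb
    simpa [Finset.sum_add_distrib] using dvd_add ha hb
  zero_mem' := by simp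
  smul_mem' := by
    intro c x hx
    simpa [Finset.mul_sum] using Dvd.dvd.mul_left hx c

/-- `N` is a sublattice of `Λ` isomorphic to `D₂₄(2)`, the `D₂₄` root lattice with
all inner products doubled. -/
def IsD24TwoSublattice (Λ : EvenUnimodularLattice 24)
    (N : Submodule ℤ (Fin 24 → ℤ)) : Prop :=
  ∃ φ : D24 →ₗ[ℤ] (Fin 24 → ℤ), Function.Injective φ ∧ LinearMap.range φ = N ∧
    ∀ x y : D24, Λ.inner (φ x) (φ y) = 2 * ((x : Fin 24 → ℤ) ⬝ᵥ (y : Fin 24 → ℤ))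

/-!
Two vectors `u ≠ ±v` of a frame are orthogonal: they are congruent modulo `2Λ`, so `(u ± v)/2`
lie in `Λ` and have norms `4 ± (u, v)/2`, which are both at least 4 because `Λ` has no roots.
Choosing one vector `wᵢ` from each pair `±wᵢ`, the map `x ↦ (∑ xᵢ wᵢ)/2` is therefore an
isometric embedding `D₂₄(2) → Λ` sending the frame `{±2eᵢ}` of `D₂₄` onto the given frame, and
its image is the lattice spanned by the half-sums, since `D₂₄` is spanned by its roots
`±eᵢ ± eⱼ = (±2eᵢ ± 2eⱼ)/2`. Conversely every embedding of `D₂₄(2)` carries `{±2eᵢ}` to a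
frame. The frame is recovered from the sublattice, because `±2eᵢ` are exactly the norm-4
vectors of `D₂₄` whose inner products with all of `D₂₄` are even.
-/

theorem exists_injective_units_smul_range_eq {G : Type*} [AddCommGroup G] {S : Set G}
    (hneg : ∀ v ∈ S, -v ∈ S) (hS : ∀ v ∈ S, v ≠ -v) :
    ∃ P : Set G, Function.Injective (fun p : P × ℤˣ => (p.2 : ℤ) • (p.1 : G)) ∧
      Set.range (fun p : P × ℤˣ => (p.2 : ℤ) • (p.1 : G)) = S := by
  let r : G → G := fun v => (⟦v⟧ : Quotient (MulAction.orbitRel ℤˣ G)).out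
  have r_smul (s : ℤˣ) (v : G) : r ((s : ℤ) • v) = r v :=
    congrArg Quotient.out (Quotient.sound ⟨s, rfl⟩)
  have exists_smul_r (v : G) : ∃ s : ℤˣ, (s : ℤ) • v = r v :=
    MulAction.orbitRel_apply.mp (Quotient.mk_out v)
  have smul_mem (s : ℤˣ) {v : G} (hv : v ∈ S) : (s : ℤ) • v ∈ S := by
    rcases Int.units_eq_one_or s with rfl | rfl
    · simpa using hv
    · simpa using hneg v hv
  refine ⟨{v ∈ S | r v = v}, ?_, ?_⟩
  · rintro ⟨⟨u, hu, hru⟩, s⟩ ⟨⟨v, hv, hrv⟩, t⟩ h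
    simp only at h
    have huv : u = v := by rw [← hru, ← hrv, ← r_smul s, h, r_smul]
    subst huv
    simp only [Prod.mk.injEq, true_and]
    rcases Int.units_eq_one_or s with rfl | rfl <;> rcases Int.units_eq_one_or t with rfl | rfl
    all_goals first
      | rfl
      | exact absurd (by simpa using h) (hS u hu)
      | exact absurd (by simpa using h.symm) (hS u hu)
  · ext v
    constructor
    · rintro ⟨⟨⟨u, hu, -⟩, s⟩, rfl⟩
      exact smul_mem s hu
    · intro hv
      obtain ⟨s, hs⟩ := exists_smul_r v
      refine ⟨⟨⟨r v, ?_, ?_⟩, s⁻¹⟩, ?_⟩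
      · rw [← hs]; exact smul_mem s hv
      · rw [← hs, r_smul, hs]
      · simp only [← hs, smul_smul, ← Units.val_mul, inv_mul_cancel, Units.val_one, one_smul]

theorem exists_eq_single_of_dotProduct_self_eq_one {ι : Type*} [Fintype ι] [DecidableEq ι]
    {z : ι → ℤ} (hz : z ⬝ᵥ z = 1) : ∃ i, ∃ s : ℤˣ, z = Pi.single i (s : ℤ) := by
  rw [dotProduct] at hz
  obtain ⟨i, hi⟩ : ∃ i, z i ≠ 0 := by
    by_contra! h
    simp [h] at hz
  have hsplit := Finset.add_sum_erase Finset.univ (fun k => z k * z k) (Finset.mem_univ i)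
  have hrest : 0 ≤ ∑ k ∈ Finset.univ.erase i, z k * z k :=
    Finset.sum_nonneg fun k _ => mul_self_nonneg (z k)
  have hzi : 0 < z i * z i := mul_self_pos.mpr hi
  have hzero : ∀ k ∈ Finset.univ.erase i, z k * z k = 0 :=
    (Finset.sum_eq_zero_iff_of_nonneg fun k _ => mul_self_nonneg (z k)).mp (by omega)
  obtain ⟨s, hs⟩ : IsUnit (z i) := IsUnit.of_mul_eq_one (z i) (by omega)
  refine ⟨i, s, funext fun k => ?_⟩
  rcases eq_or_ne k i with rfl | hk
  · simp [hs]
  · simpa [hk] using hzero k (by simp [hk])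

theorem exists_eq_single_two_of_dotProduct_self_eq_four {ι : Type*} [Fintype ι]
    [DecidableEq ι] (hι : 4 < Fintype.card ι) {x : ι → ℤ} (hx : x ⬝ᵥ x = 4)
    (hpar : ∀ i j, 2 ∣ x i - x j) :
    ∃ i, ∃ s : ℤˣ, x = Pi.single i (2 * (s : ℤ)) := by
  by_cases heven : ∀ i, 2 ∣ x i
  · choose z hz using heven
    have hzz : z ⬝ᵥ z = 1 := by
      have : x ⬝ᵥ x = 4 * (z ⬝ᵥ z) := by
        simp only [dotProduct, hz, Finset.mul_sum]
        exact Finset.sum_congr rfl fun _ _ => by ring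
      omega
    obtain ⟨i, s, hzi⟩ := exists_eq_single_of_dotProduct_self_eq_one hzz
    refine ⟨i, s, funext fun k => ?_⟩
    rw [hz k, hzi, Pi.single_apply, Pi.single_apply]
    split_ifs <;> simp
  · -- all coordinates are then odd, so `x ⬝ᵥ x ≥ card ι`
    push Not at heven
    obtain ⟨i₀, hi₀⟩ := heven
    have hodd : ∀ k, 1 ≤ x k * x k := fun k => by
      have hk : x k ≠ 0 := fun h => hi₀ (by simpa [h] using hpar i₀ k)
      nlinarith [mul_self_pos.mpr hk]
    have : (Fintype.card ι : ℤ) ≤ x ⬝ᵥ x := by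
      simpa [dotProduct] using Finset.sum_le_sum fun k (_ : k ∈ Finset.univ) => hodd k
    omega

theorem LinearMap.exists_smul_eq_of_dvd {M ι : Type*} [AddCommGroup M] [Module ℤ M]
    (f : M →ₗ[ℤ] ι → ℤ) (n : ℤ) (hf : ∀ x i, n ∣ f x i) :
    ∃ g : M →ₗ[ℤ] ι → ℤ, ∀ x, n • g x = f x := by
  refine ⟨{ toFun := fun x i => f x i / n, map_add' := ?_, map_smul' := ?_ }, ?_⟩
  · intro x y
    funext i
    simp [Int.add_ediv_of_dvd_left (hf x i)]
  · intro c x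
    funext i
    simp [Int.mul_ediv_assoc c (hf x i)]
  · intro x
    funext i
    exact Int.mul_ediv_cancel' (hf x i)

namespace EvenUnimodularLattice

variable {m : ℕ} (Λ : EvenUnimodularLattice m)

theorem inner_comm (x y : Fin m → ℤ) : Λ.inner x y = Λ.inner y x := by
  rw [inner, inner, dotProduct_mulVec, ← mulVec_transpose, Λ.symm.eq, dotProduct_comm]

@[simp] theorem inner_zero_left (y : Fin m → ℤ) : Λ.inner 0 y = 0 := by simp [inner]

@[simp] theorem inner_add_left (x x' y : Fin m → ℤ) :
    Λ.inner (x + x') y = Λ.inner x y + Λ.inner x' y := by simp [inner, add_dotProduct]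

@[simp] theorem inner_add_right (x y y' : Fin m → ℤ) :
    Λ.inner x (y + y') = Λ.inner x y + Λ.inner x y' := by simp [inner, mulVec_add]

@[simp] theorem inner_sub_left (x x' y : Fin m → ℤ) :
    Λ.inner (x - x') y = Λ.inner x y - Λ.inner x' y := by simp [inner, sub_dotProduct]

@[simp] theorem inner_sub_right (x y y' : Fin m → ℤ) :
    Λ.inner x (y - y') = Λ.inner x y - Λ.inner x y' := by simp [inner, mulVec_sub]

@[simp] theorem inner_smul_left (c : ℤ) (x y : Fin m → ℤ) :
    Λ.inner (c • x) y = c * Λ.inner x y := by simp only [inner, smul_dotProduct, smul_eq_mul]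

@[simp] theorem inner_smul_right (c : ℤ) (x y : Fin m → ℤ) :
    Λ.inner x (c • y) = c * Λ.inner x y := by
  simp only [inner, mulVec_smul, dotProduct_smul, smul_eq_mul]

theorem inner_sum_left {ι : Type*} (s : Finset ι) (x : ι → Fin m → ℤ) (y : Fin m → ℤ) :
    Λ.inner (∑ i ∈ s, x i) y = ∑ i ∈ s, Λ.inner (x i) y := by
  simp only [inner, sum_dotProduct]

theorem inner_sum_right {ι : Type*} (s : Finset ι) (x : Fin m → ℤ) (y : ι → Fin m → ℤ) :
    Λ.inner x (∑ i ∈ s, y i) = ∑ i ∈ s, Λ.inner x (y i) := by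
  simp only [inner, mulVec_sum, dotProduct_sum]

theorem inner_sum_smul_of_orthogonal {ι : Type*} [Fintype ι] [DecidableEq ι]
    {w : ι → Fin m → ℤ} {c : ℤ} (hw : ∀ i j, Λ.inner (w i) (w j) = if i = j then c else 0)
    (x y : ι → ℤ) :
    Λ.inner (∑ i, x i • w i) (∑ j, y j • w j) = c * (x ⬝ᵥ y) := by
  simp only [inner_sum_left, inner_sum_right, inner_smul_left, inner_smul_right, hw, mul_ite,
    mul_zero, Finset.sum_ite_eq', Finset.mem_univ, if_true, dotProduct, Finset.mul_sum]
  exact Finset.sum_congr rfl fun _ _ => by ring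

theorem red_eq_red_iff {u v : Fin m → ℤ} : Λ.red u = Λ.red v ↔ ∃ z, u - v = (2 : ℤ) • z := by
  have hcoord : Λ.red u = Λ.red v ↔ ∀ k, 2 ∣ u k - v k := by
    simp only [red, funext_iff, ZMod.intCast_eq_intCast_iff_dvd_sub, dvd_sub_comm]
    norm_cast
  rw [hcoord]
  constructor
  · intro h
    choose z hz using h
    exact ⟨z, funext hz⟩
  · rintro ⟨z, hz⟩ k
    exact ⟨z k, congrFun hz k⟩

theorem two_dvd_sum_smul_of_red_eq {ι : Type*} [Fintype ι] {w : ι → Fin m → ℤ}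
    {v : Fin m → ℤ} (hw : ∀ i, Λ.red (w i) = Λ.red v) {x : ι → ℤ} (hx : 2 ∣ ∑ i, x i) (k : Fin m) :
    2 ∣ (∑ i, x i • w i) k := by
  have hwk (i : ι) : ((w i k : ℤ) : ZMod 2) = (v k : ZMod 2) := congrFun (hw i) k
  have hx' : ((∑ i, x i : ℤ) : ZMod 2) = 0 :=
    (ZMod.intCast_zmod_eq_zero_iff_dvd _ 2).mpr hx
  refine (ZMod.intCast_zmod_eq_zero_iff_dvd _ 2).mp ?_
  push_cast at hx' ⊢
  simp only [Finset.sum_apply, Pi.smul_apply, smul_eq_mul, Int.cast_sum, Int.cast_mul, hwk,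
    ← Finset.sum_mul, hx', zero_mul]

end EvenUnimodularLattice

namespace IsLeech

variable {Λ : EvenUnimodularLattice 24}

theorem four_le_inner_self (hΛ : IsLeech Λ) {w : Fin 24 → ℤ} (hw : w ≠ 0) :
    4 ≤ Λ.inner w w := by
  have hpos : 0 < Λ.inner w w := Λ.posdef w hw
  have heven : 2 ∣ Λ.inner w w := Λ.even w
  have hne := hΛ w
  omega

theorem inner_eq_zero_of_red_eq (hΛ : IsLeech Λ) {u v : Fin 24 → ℤ} (hu : Λ.inner u u = 8)
    (hv : Λ.inner v v = 8) (huv : Λ.red u = Λ.red v) (hne : v ≠ u) (hne' : v ≠ -u) :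
    Λ.inner u v = 0 := by
  obtain ⟨a, ha⟩ := Λ.red_eq_red_iff.mp huv
  obtain ⟨b, hb⟩ : ∃ b, u + v = (2 : ℤ) • b := ⟨a + v, by rw [smul_add, ← ha]; module⟩
  have norm_a : 4 * Λ.inner a a = 16 - 2 * Λ.inner u v := by
    have := congrArg (fun z => Λ.inner z z) ha
    simp only [Λ.inner_sub_left, Λ.inner_sub_right, Λ.inner_smul_left, Λ.inner_smul_right,
      Λ.inner_comm v u, hu, hv] at this
    linarith
  have norm_b : 4 * Λ.inner b b = 16 + 2 * Λ.inner u v := by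
    have := congrArg (fun z => Λ.inner z z) hb
    simp only [Λ.inner_add_left, Λ.inner_add_right, Λ.inner_smul_left, Λ.inner_smul_right,
      Λ.inner_comm v u, hu, hv] at this
    linarith
  have ha4 := hΛ.four_le_inner_self (w := a) (by
    rintro rfl
    exact hne (sub_eq_zero.mp (by simpa using ha)).symm)
  have hb4 := hΛ.four_le_inner_self (w := b) (by
    rintro rfl
    exact hne' (eq_neg_of_add_eq_zero_right (by simpa using hb)))
  omega

end IsLeech

namespace D24

theorem mem_iff {x : Fin 24 → ℤ} : x ∈ D24 ↔ 2 ∣ ∑ i, x i := Iff.rfl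

/-- For `i ≠ j` the vectors `s eᵢ + t eⱼ` are the roots of `D₂₄`. -/
def root (i j : Fin 24) (s t : ℤˣ) : D24 :=
  ⟨Pi.single i (s : ℤ) + Pi.single j (t : ℤ), by
    rcases Int.units_eq_one_or s with rfl | rfl <;>
      rcases Int.units_eq_one_or t with rfl | rfl <;> simp [mem_iff, Finset.sum_add_distrib]⟩

def frameVec (p : Fin 24 × ℤˣ) : D24 :=
  ⟨Pi.single p.1 (2 * (p.2 : ℤ)), by simp [mem_iff]⟩

/-- The standard frame `{±2eᵢ}` of `D₂₄`. -/
def frame : Set D24 := Set.range frameVec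

theorem frameVec_injective : Function.Injective frameVec := by
  rintro ⟨i, s⟩ ⟨j, t⟩ h
  have hi := congrFun (congrArg Subtype.val h) i
  rcases eq_or_ne i j with rfl | hij
  · simp only [frameVec, Pi.single_eq_same, mul_eq_mul_left_iff] at hi
    simpa [Units.val_inj] using hi
  · simp [frameVec, hij] at hi

theorem neg_frameVec (i : Fin 24) (s : ℤˣ) : -frameVec (i, s) = frameVec (i, -s) := by
  ext1
  simp [frameVec, Pi.single_neg]

theorem two_smul_root (i j : Fin 24) (s t : ℤˣ) :
    (2 : ℤ) • root i j s t = frameVec (i, s) + frameVec (j, t) := by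
  ext1
  funext k
  simp only [root, frameVec, Submodule.coe_smul, Submodule.coe_add, Pi.smul_apply,
    Pi.add_apply, Pi.single_apply, smul_eq_mul]
  split_ifs <;> ring

theorem span_roots : Submodule.span ℤ {x | ∃ i j s t, i ≠ j ∧ root i j s t = x} = ⊤ := by
  set M := Submodule.span ℤ {x | ∃ i j s t, i ≠ j ∧ root i j s t = x}
  have root_mem {i j : Fin 24} (s t : ℤˣ) (hij : i ≠ j) : root i j s t ∈ M :=
    Submodule.subset_span ⟨i, j, s, t, hij, rfl⟩
  refine eq_top_iff.mpr fun y _ => ?_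
  obtain ⟨k, hk⟩ := mem_iff.mp y.2
  have hy : y = ∑ i : Fin 23, (y : Fin 24 → ℤ) i.succ • root i.succ 0 1 (-1)
      + k • (root 0 1 1 1 + root 0 1 1 (-1)) := by
    ext j
    rw [Fin.sum_univ_succ] at hk
    cases j using Fin.cases with
    | zero => simp [root, Finset.sum_apply, Fin.succ_ne_zero]; omega
    | succ j =>
      simp [root, Finset.sum_apply, Pi.single_apply, Fin.succ_ne_zero]
      split_ifs <;> ring
  rw [hy]
  exact M.add_mem (M.sum_mem fun i _ => M.smul_mem _ (root_mem _ _ i.succ_ne_zero))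
    (M.smul_mem _ (M.add_mem (root_mem _ _ (by decide)) (root_mem _ _ (by decide))))

theorem mem_frame_iff (x : D24) :
    x ∈ frame ↔ (x : Fin 24 → ℤ) ⬝ᵥ x = 4 ∧ ∀ y : D24, 2 ∣ (x : Fin 24 → ℤ) ⬝ᵥ y := by
  constructor
  · rintro ⟨⟨i, s⟩, rfl⟩
    refine ⟨?_, fun y => ⟨s * (y : Fin 24 → ℤ) i, ?_⟩⟩
    · simp only [frameVec, single_dotProduct, Pi.single_eq_same]
      linear_combination 4 * Int.units_coe_mul_self s
    · simp only [frameVec, single_dotProduct]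
      ring
  · rintro ⟨hx, hdvd⟩
    have hpar (i j : Fin 24) : 2 ∣ (x : Fin 24 → ℤ) i - (x : Fin 24 → ℤ) j := by
      simpa [root, dotProduct_add, dotProduct_single, sub_eq_add_neg] using
        hdvd (root i j 1 (-1))
    obtain ⟨i, s, hxi⟩ := exists_eq_single_two_of_dotProduct_self_eq_four (by simp) hx hpar
    exact ⟨(i, s), Subtype.ext hxi.symm⟩

end D24

open D24 in
theorem halfSumLattice_image_frame {φ : D24 →ₗ[ℤ] (Fin 24 → ℤ)} (hφ : Function.Injective φ) :
    halfSumLattice (φ '' frame) = LinearMap.range φ := by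
  apply le_antisymm
  · refine Submodule.span_le.mpr ?_
    rintro x ⟨_, ⟨_, ⟨⟨i, s⟩, rfl⟩, rfl⟩, _, ⟨_, ⟨⟨j, t⟩, rfl⟩, rfl⟩, -, -, hx⟩
    refine ⟨root i j s t, smul_right_injective (Fin 24 → ℤ) (two_ne_zero (α := ℤ)) ?_⟩
    simp only [← map_smul, two_smul_root, map_add, hx]
  · rw [LinearMap.range_eq_map, ← span_roots, Submodule.map_span, Submodule.span_le]
    rintro _ ⟨_, ⟨i, j, s, t, hij, rfl⟩, rfl⟩
    have hne (s' : ℤˣ) : φ (frameVec (j, t)) ≠ φ (frameVec (i, s')) :=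
      fun h => hij (congrArg Prod.fst (frameVec_injective (hφ h))).symm
    refine Submodule.subset_span ⟨φ (frameVec (i, s)), ⟨_, ⟨_, rfl⟩, rfl⟩,
      φ (frameVec (j, t)), ⟨_, ⟨_, rfl⟩, rfl⟩, hne s, ?_, ?_⟩
    · rw [← map_neg, neg_frameVec]
      exact hne (-s)
    · rw [← map_smul, two_smul_root, map_add]

def IsD24TwoIsometry (Λ : EvenUnimodularLattice 24) (φ : D24 →ₗ[ℤ] (Fin 24 → ℤ)) : Prop :=
  ∀ x y : D24, Λ.inner (φ x) (φ y) = 2 * ((x : Fin 24 → ℤ) ⬝ᵥ (y : Fin 24 → ℤ))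

namespace IsD24TwoIsometry

open D24

variable {Λ : EvenUnimodularLattice 24} {φ : D24 →ₗ[ℤ] (Fin 24 → ℤ)}

theorem injective (hφ : IsD24TwoIsometry Λ φ) : Function.Injective φ := by
  refine (injective_iff_map_eq_zero φ).mpr fun x hx => ?_
  have hxx := hφ x x
  rw [hx, Λ.inner_zero_left] at hxx
  exact Subtype.ext (dotProduct_self_eq_zero.mp (by omega))

theorem isFrame_image_frame (hφ : IsD24TwoIsometry Λ φ) : IsFrame Λ (φ '' frame) := by
  refine ⟨?_, ?_, ?_, ?_⟩
  · rw [frame, ← Set.range_comp,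
      Nat.card_range_of_injective (hφ.injective.comp frameVec_injective)]
    simp
  · rintro _ ⟨_, ⟨⟨i, s⟩, rfl⟩, rfl⟩
    exact ⟨frameVec (i, -s), ⟨_, rfl⟩, by rw [← neg_frameVec, map_neg]⟩
  · rintro _ ⟨x, hx, rfl⟩
    rw [hφ, ((mem_frame_iff x).mp hx).1]
    norm_num
  · rintro _ ⟨_, ⟨⟨i, s⟩, rfl⟩, rfl⟩ _ ⟨_, ⟨⟨j, t⟩, rfl⟩, rfl⟩
    refine Λ.red_eq_red_iff.mpr ⟨φ (root i j s (-t)), ?_⟩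
    rw [← map_smul, two_smul_root, ← neg_frameVec, map_add, map_neg, sub_eq_add_neg]

theorem image_frame_eq (hφ : IsD24TwoIsometry Λ φ) :
    φ '' frame = {v | v ∈ LinearMap.range φ ∧ Λ.inner v v = 8 ∧
      ∀ u ∈ LinearMap.range φ, 4 ∣ Λ.inner v u} := by
  ext v
  constructor
  · rintro ⟨x, hx, rfl⟩
    obtain ⟨hxx, hdvd⟩ := (mem_frame_iff x).mp hx
    refine ⟨⟨x, rfl⟩, by rw [hφ, hxx]; norm_num, ?_⟩
    rintro _ ⟨y, rfl⟩
    rw [hφ]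
    exact mul_dvd_mul_left 2 (hdvd y)
  · rintro ⟨⟨x, rfl⟩, h8, h4⟩
    refine ⟨x, (mem_frame_iff x).mpr ⟨by rw [hφ] at h8; omega, fun y => ?_⟩, rfl⟩
    have hxy := h4 (φ y) ⟨y, rfl⟩
    rw [hφ] at hxy
    omega

end IsD24TwoIsometry

namespace IsFrame

open D24

variable {Λ : EvenUnimodularLattice 24} {S : Set (Fin 24 → ℤ)}

theorem exists_injective_units_smul_range_eq (hS : IsFrame Λ S) :
    ∃ w : Fin 24 → Fin 24 → ℤ,
      Function.Injective (fun p : Fin 24 × ℤˣ => (p.2 : ℤ) • w p.1) ∧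
      Set.range (fun p : Fin 24 × ℤˣ => (p.2 : ℤ) • w p.1) = S := by
  obtain ⟨hcard, hneg, hnorm, -⟩ := hS
  have hne (v) (hv : v ∈ S) : v ≠ -v := by
    intro h
    simpa [self_eq_neg.mp h] using hnorm v hv
  obtain ⟨P, hinj, hrange⟩ := _root_.exists_injective_units_smul_range_eq hneg hne
  have hP : Nat.card P = 24 := by
    rw [← hrange, Nat.card_range_of_injective hinj, Nat.card_prod,
      Nat.card_eq_fintype_card (α := ℤˣ), Fintype.card_units_int] at hcard
    omega
  have : Finite P := Nat.finite_of_card_ne_zero (by omega)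
  let e : Fin 24 × ℤˣ ≃ P × ℤˣ :=
    ((Finite.equivFin P).trans (finCongr hP)).symm.prodCongr (.refl _)
  refine ⟨fun i => (e (i, 1)).1, hinj.comp e.injective, ?_⟩
  rw [← hrange, ← e.surjective.range_comp]
  rfl

theorem exists_isD24TwoIsometry_image_frame_eq (hΛ : IsLeech Λ) (hS : IsFrame Λ S) :
    ∃ φ, IsD24TwoIsometry Λ φ ∧ φ '' frame = S := by
  obtain ⟨w, hinj, hrange⟩ := hS.exists_injective_units_smul_range_eq
  obtain ⟨-, -, hnorm, hred⟩ := hS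
  have hwS (i : Fin 24) : w i ∈ S := hrange ▸ ⟨(i, 1), one_smul ℤ (w i)⟩
  have horth (i j : Fin 24) : Λ.inner (w i) (w j) = if i = j then 8 else 0 := by
    split_ifs with hij
    · subst hij
      exact hnorm _ (hwS i)
    · refine hΛ.inner_eq_zero_of_red_eq (hnorm _ (hwS i)) (hnorm _ (hwS j))
        (hred _ (hwS i) _ (hwS j)) (fun h => hij ?_) (fun h => hij ?_)
      · exact (congrArg Prod.fst (@hinj (j, 1) (i, 1) (by simpa using h))).symm
      · exact (congrArg Prod.fst (@hinj (j, 1) (i, -1) (by simpa using h))).symm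
  obtain ⟨φ, hφ⟩ := ((Fintype.linearCombination ℤ w).comp D24.subtype).exists_smul_eq_of_dvd 2
    fun x k => by
      simpa [Fintype.linearCombination_apply] using
        Λ.two_dvd_sum_smul_of_red_eq (fun i => hred _ (hwS i) _ (hwS 0)) x.2 k
  refine ⟨φ, fun x y => ?_, ?_⟩
  · have hxy := Λ.inner_sum_smul_of_orthogonal horth x y
    simp only [LinearMap.comp_apply, Submodule.subtype_apply,
      Fintype.linearCombination_apply] at hφ
    rw [← hφ x, ← hφ y, Λ.inner_smul_left, Λ.inner_smul_right] at hxy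
    linarith
  · have hφ_frameVec (p : Fin 24 × ℤˣ) : φ (frameVec p) = (p.2 : ℤ) • w p.1 := by
      refine smul_right_injective (Fin 24 → ℤ) (two_ne_zero (α := ℤ)) ?_
      simp only [hφ, LinearMap.comp_apply, Submodule.subtype_apply, frameVec,
        Fintype.linearCombination_apply_single, smul_smul]
    rw [← hrange, frame, ← Set.range_comp]
    exact congrArg Set.range (funext hφ_frameVec)

theorem eq_setOf_halfSumLattice (hΛ : IsLeech Λ) (hS : IsFrame Λ S) :
    S = {v | v ∈ halfSumLattice S ∧ Λ.inner v v = 8 ∧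
      ∀ u ∈ halfSumLattice S, 4 ∣ Λ.inner v u} := by
  obtain ⟨φ, hφ, rfl⟩ := exists_isD24TwoIsometry_image_frame_eq hΛ hS
  rw [halfSumLattice_image_frame hφ.injective]
  exact hφ.image_frame_eq

end IsFrame

/-- For the Leech lattice `Λ`, the map sending a frame `S` to the
sublattice generated by the vectors `(±vᵢ ± vⱼ)/2` is a bijection between frames of
`Λ` and sublattices of `Λ` isomorphic to `D₂₄(2)`. -/
theorem frames_biject_with_D24_sublattices (Λ : EvenUnimodularLattice 24)
    (hΛ : IsLeech Λ) :
    (∀ S : Set (Fin 24 → ℤ), IsFrame Λ S → IsD24TwoSublattice Λ (halfSumLattice S)) ∧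
    (∀ S S' : Set (Fin 24 → ℤ), IsFrame Λ S → IsFrame Λ S' →
      halfSumLattice S = halfSumLattice S' → S = S') ∧
    (∀ N : Submodule ℤ (Fin 24 → ℤ), IsD24TwoSublattice Λ N →
      ∃ S : Set (Fin 24 → ℤ), IsFrame Λ S ∧ halfSumLattice S = N) := by
  refine ⟨fun S hS => ?_, fun S S' hS hS' h => ?_, fun N ⟨φ, hinj, hrange, hφ⟩ => ?_⟩
  · obtain ⟨φ, hφ, rfl⟩ := IsFrame.exists_isD24TwoIsometry_image_frame_eq hΛ hS
    exact ⟨φ, hφ.injective, (halfSumLattice_image_frame hφ.injective).symm, hφ⟩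
  · rw [hS.eq_setOf_halfSumLattice hΛ, hS'.eq_setOf_halfSumLattice hΛ, h]
  · exact ⟨φ '' D24.frame, IsD24TwoIsometry.isFrame_image_frame hφ,
      (halfSumLattice_image_frame hinj).trans hrange⟩
end

section
/- Let Λ be the Leech lattice and let E = Λ/2Λ with its quadratic form. Define ε(F) = ±1 on maximal isotropic subspaces F of E according to the two orbits of the kernel of the Dickson invariant, normalized to be +1 on the subspaces arising from embedded copies of D_{24}^+(2). Then the Fourier coefficient a(D_{12}) = #Aut(Λ)·#Aut(D_{12})·Σ_M ε(M/2M)/#Aut(Λ,M), where M runs over Aut(Λ)-orbit representatives of sublattices of Λ isomorphic to D_{12}(2) with maximal isotropic image, equals 2^{28}·3^{13}·5^5·7^3·11·13·23·(ε_1·11 + ε_2·4) for signs ε_1, ε_2 ∈ {±1}, and in particular is nonzero. -/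
/-- Computation of the Fourier coefficient `a(D₁₂)` of the Siegel
cusp form, following Lemma 1 of the paper.  With `#Aut(Λ) = 2²²·3⁹·5⁴·7²·11·13·23`
(Leech lattice), `#Aut(D₁₂) = 2¹²·12!`, `n_F = 8292375` frames, and the two
`Aut(Λ)`-orbits of `D₁₂(2)`-sublattices with maximal isotropic image, of sizes
`2⁶·3²·7·11·23·n_F` and `2⁸·3²·7·23·n_F` (with stabilizers of orders `st₁, st₂`),
and with constant signs `ε₁, ε₂ ∈ {±1}` on the two orbits, one has
`a(D₁₂) = #Aut(Λ)·#Aut(D₁₂)·(ε₁/st₁ + ε₂/st₂)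
       = 2²⁸·3¹³·5⁵·7³·11·13·23·(11ε₁ + 4ε₂) ≠ 0`. -/
theorem fourier_coefficient_D12_nonzero
    (autΛ autD12 nF st₁ st₂ : ℕ)
    (hautΛ : autΛ = 2^22 * 3^9 * 5^4 * 7^2 * 11 * 13 * 23)
    (hautD12 : autD12 = 2^12 * Nat.factorial 12)
    (hnF : nF = 8292375)
    (hst₁ : st₁ * (2^6 * 3^2 * 7 * 11 * 23 * nF) = autΛ)
    (hst₂ : st₂ * (2^8 * 3^2 * 7 * 23 * nF) = autΛ)
    (ε₁ ε₂ : ℚ) (hε₁ : ε₁ = 1 ∨ ε₁ = -1) (hε₂ : ε₂ = 1 ∨ ε₂ = -1) :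
    (autΛ : ℚ) * (autD12 : ℚ) * (ε₁ / (st₁ : ℚ) + ε₂ / (st₂ : ℚ)) =
      2^28 * 3^13 * 5^5 * 7^3 * 11 * 13 * 23 * (ε₁ * 11 + ε₂ * 4) ∧
    (autΛ : ℚ) * (autD12 : ℚ) * (ε₁ / (st₁ : ℚ) + ε₂ / (st₂ : ℚ)) ≠ 0 := by
  subst hautΛ hautD12 hnF
  have h1 : st₁ = 983040 := by omega
  have h2 : st₂ = 2703360 := by omega
  subst h1 h2
  have key : ((2^22 * 3^9 * 5^4 * 7^2 * 11 * 13 * 23 : ℕ) : ℚ) *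
      ((2^12 * Nat.factorial 12 : ℕ) : ℚ) *
      (ε₁ / ((983040 : ℕ) : ℚ) + ε₂ / ((2703360 : ℕ) : ℚ)) =
      2^28 * 3^13 * 5^5 * 7^3 * 11 * 13 * 23 * (ε₁ * 11 + ε₂ * 4) := by
    norm_num [Nat.factorial]
    ring
  refine ⟨key, key ▸ ?_⟩
  rcases hε₁ with rfl | rfl <;> rcases hε₂ with rfl | rfl <;> norm_num
end
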